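/- arXiv:2506.22281 — 2 statements merged into one kernel-verified Lean document; each statement's English description precedes it below -/
import Mathlib

section
/- Let (S, R) be a bipartition of V_A and (S', R') be a bipartition of V_B, and suppose q_S ≥ p_{S'}. Then for every v ∈ S ∪ S' one has |N_{S ∪ S'}(v)| ≥ |N_{V ∖ (S ∪ S')}(v)|, and for every v ∈ V ∖ (S ∪ S') one has |N_{V ∖ (S ∪ S')}(v)| ≥ |N_{S ∪ S'}(v)|. -/
open Finset

variable {V : Type*} [Fintype V] [DecidableEq V]

/-- `nbr G A v = |N_A(v)|`, the number of neighbors of `v` lying in `A`. -/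
def nbr (G : SimpleGraph V) [DecidableRel G.Adj] (A : Finset V) (v : V) : ℕ :=
  (G.neighborFinset v ∩ A).card

/-- The query vector `q_S` (2 entries per vertex) associated to a bipartition `(S, R)` of `V_A`;
vertices outside `S ∪ R` are exactly those of `V_B`. -/
def qvec (G : SimpleGraph V) [DecidableRel G.Adj] (n : ℕ) (S R : Finset V) (v : V) :
    Fin 2 → ℤ :=
  if v ∈ S then ![(nbr G S v : ℤ) - (nbr G R v : ℤ), (n : ℤ)]
  else if v ∈ R then ![(n : ℤ), (nbr G R v : ℤ) - (nbr G S v : ℤ)]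
  else ![(nbr G S v : ℤ) - (nbr G R v : ℤ), (nbr G R v : ℤ) - (nbr G S v : ℤ)]

/-- The data vector `p_{S'}` (2 entries per vertex) associated to a bipartition `(S', R')`
of `V_B`; vertices outside `S' ∪ R'` are exactly those of `V_A`. -/
def pvec (G : SimpleGraph V) [DecidableRel G.Adj] (n : ℕ) (S' R' : Finset V) (v : V) :
    Fin 2 → ℤ :=
  if v ∈ S' then ![(nbr G R' v : ℤ) - (nbr G S' v : ℤ), -(n : ℤ)]
  else if v ∈ R' then ![-(n : ℤ), (nbr G S' v : ℤ) - (nbr G R' v : ℤ)]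
  else ![(nbr G R' v : ℤ) - (nbr G S' v : ℤ), (nbr G S' v : ℤ) - (nbr G R' v : ℤ)]

/-- An internal partition of `G`: a proper bipartition `(V_L, V_R)` of the vertex set such that
every vertex has at least as many neighbors in its own part as in the other part. -/
def IsInternalPartition (G : SimpleGraph V) [DecidableRel G.Adj] (VL VR : Finset V) : Prop :=
  Disjoint VL VR ∧ VL ∪ VR = Finset.univ ∧ VL.Nonempty ∧ VR.Nonempty ∧
    (∀ v ∈ VL, nbr G VR v ≤ nbr G VL v) ∧ (∀ v ∈ VR, nbr G VL v ≤ nbr G VR v)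

/-!
The first coordinate of `q_S ≥ p_{S'}` at a vertex outside `R ∪ R'`, and the second one at a
vertex outside `S ∪ S'`, are exactly the two claimed inequalities once the neighbor counts are
split along the partition `V = S ∪ S' ∪ R ∪ R'`; the padding entries `±n` never occur there.
-/

theorem isCompl_sup_sup_of_isCompl {α : Type*} [DistribLattice α] [BoundedOrder α]
    {A B a b c d : α} (h : IsCompl A B) (hab : a ⊔ b = A) (hcd : c ⊔ d = B)
    (hb : Disjoint a b) (hd : Disjoint c d) : IsCompl (a ⊔ c) (b ⊔ d) := by
  have haB : Disjoint a B := h.disjoint.mono_left (hab ▸ le_sup_left)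
  have hcA : Disjoint c A := h.disjoint.symm.mono_left (hcd ▸ le_sup_left)
  refine ⟨?_, ?_⟩
  · exact (hb.sup_right (haB.mono_right (hcd ▸ le_sup_right))).sup_left
      ((hcA.mono_right (hab ▸ le_sup_right)).sup_right hd)
  · rw [codisjoint_iff, sup_sup_sup_comm, hab, hcd]
    exact h.sup_eq_top

section Vectors

variable (G : SimpleGraph V) [DecidableRel G.Adj] (n : ℕ) {S R : Finset V} {v : V}

lemma nbr_union {A B : Finset V} (h : Disjoint A B) (v : V) :
    nbr G (A ∪ B) v = nbr G A v + nbr G B v := by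
  rw [nbr, inter_union_distrib_left, card_union_of_disjoint]
  · rfl
  · exact h.mono inter_subset_right inter_subset_right

lemma qvec_zero_of_notMem (hv : v ∉ R) :
    qvec G n S R v 0 = (nbr G S v : ℤ) - nbr G R v := by
  unfold qvec; split_ifs <;> simp_all

lemma qvec_one_of_notMem (hv : v ∉ S) :
    qvec G n S R v 1 = (nbr G R v : ℤ) - nbr G S v := by
  unfold qvec; split_ifs <;> simp_all

lemma pvec_zero_of_notMem (hv : v ∉ R) :
    pvec G n S R v 0 = (nbr G R v : ℤ) - nbr G S v := by
  unfold pvec; split_ifs <;> simp_all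

lemma pvec_one_of_notMem (hv : v ∉ S) :
    pvec G n S R v 1 = (nbr G S v : ℤ) - nbr G R v := by
  unfold pvec; split_ifs <;> simp_all

variable {S' R' : Finset V}

lemma nbr_add_le_of_pvec_le_qvec_zero (hR : v ∉ R) (hR' : v ∉ R')
    (h : pvec G n S' R' v 0 ≤ qvec G n S R v 0) :
    nbr G R v + nbr G R' v ≤ nbr G S v + nbr G S' v := by
  rw [pvec_zero_of_notMem G n hR', qvec_zero_of_notMem G n hR] at h
  omega

lemma nbr_add_le_of_pvec_le_qvec_one (hS : v ∉ S) (hS' : v ∉ S')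
    (h : pvec G n S' R' v 1 ≤ qvec G n S R v 1) :
    nbr G S v + nbr G S' v ≤ nbr G R v + nbr G R' v := by
  rw [pvec_one_of_notMem G n hS', qvec_one_of_notMem G n hS] at h
  omega

end Vectors

theorem stmt_2_general (G : SimpleGraph V) [DecidableRel G.Adj]
    (n : ℕ)
    (VA VB : Finset V) (hABdisj : Disjoint VA VB) (hABuniv : VA ∪ VB = Finset.univ)
    (S R : Finset V) (hSR : Disjoint S R) (hSRu : S ∪ R = VA)
    (S' R' : Finset V) (hSR' : Disjoint S' R') (hSRu' : S' ∪ R' = VB)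
    (hdom : ∀ v : V, ∀ k : Fin 2, pvec G n S' R' v k ≤ qvec G n S R v k) :
    (∀ v ∈ S ∪ S', nbr G (Finset.univ \ (S ∪ S')) v ≤ nbr G (S ∪ S') v) ∧
      (∀ v ∈ Finset.univ \ (S ∪ S'), nbr G (S ∪ S') v ≤ nbr G (Finset.univ \ (S ∪ S')) v) := by
  have hAB : IsCompl VA VB := ⟨hABdisj, codisjoint_iff.2 hABuniv⟩
  have hpart : IsCompl (S ∪ S') (R ∪ R') := isCompl_sup_sup_of_isCompl hAB hSRu hSRu' hSR hSR'
  have hcompl : univ \ (S ∪ S') = R ∪ R' := by rw [← compl_eq_univ_sdiff, hpart.compl_eq]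
  have hSS' : Disjoint S S' :=
    hABdisj.mono (hSRu ▸ subset_union_left) (hSRu' ▸ subset_union_left)
  have hRR' : Disjoint R R' :=
    hABdisj.mono (hSRu ▸ subset_union_right) (hSRu' ▸ subset_union_right)
  simp only [hcompl, nbr_union G hSS', nbr_union G hRR']
  constructor
  · intro v hv
    have hv' : v ∉ R ∪ R' := disjoint_left.1 hpart.disjoint hv
    rw [mem_union, not_or] at hv'
    exact nbr_add_le_of_pvec_le_qvec_zero G n hv'.1 hv'.2 (hdom v 0)
  · intro v hv
    have hv' : v ∉ S ∪ S' := disjoint_right.1 hpart.disjoint hv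
    rw [mem_union, not_or] at hv'
    exact nbr_add_le_of_pvec_le_qvec_one G n hv'.1 hv'.2 (hdom v 1)

/-- if `(S, R)` is a bipartition of `V_A`, `(S', R')` is a bipartition of `V_B`,
and `q_S ≥ p_{S'}`, then every `v ∈ S ∪ S'` has at least as many neighbors in `S ∪ S'` as in
`V ∖ (S ∪ S')`, and every `v ∈ V ∖ (S ∪ S')` has at least as many neighbors in
`V ∖ (S ∪ S')` as in `S ∪ S'`. -/
theorem stmt_2 (G : SimpleGraph V) [DecidableRel G.Adj]
    (n : ℕ) (hn : n = Fintype.card V)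
    (VA VB : Finset V) (hABdisj : Disjoint VA VB) (hABuniv : VA ∪ VB = Finset.univ)
    (S R : Finset V) (hSR : Disjoint S R) (hSRu : S ∪ R = VA)
    (S' R' : Finset V) (hSR' : Disjoint S' R') (hSRu' : S' ∪ R' = VB)
    (hdom : ∀ v : V, ∀ k : Fin 2, pvec G n S' R' v k ≤ qvec G n S R v k) :
    (∀ v ∈ S ∪ S', nbr G (Finset.univ \ (S ∪ S')) v ≤ nbr G (S ∪ S') v) ∧
      (∀ v ∈ Finset.univ \ (S ∪ S'), nbr G (S ∪ S') v ≤ nbr G (Finset.univ \ (S ∪ S')) v) :=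
  stmt_2_general G n VA VB hABdisj hABuniv S R hSR hSRu S' R' hSR' hSRu' hdom
end

section
/- Suppose (V_L, V_R) is a feasible interval-constrained cut of G, and set S = V_A ∩ V_L, R = V_A ∩ V_R, S' = V_B ∩ V_L, R' = V_B ∩ V_R. Then q_S ≥ p_{S'} + r, i.e., q_v^k ≥ p_v^k + r_v^k for every v ∈ V and every k ∈ {1, …, 8}. -/
open Finset

variable {V : Type*} [Fintype V] [DecidableEq V]

/-- A feasible interval-constrained cut: a proper bipartition `(V_L, V_R)` of `V` satisfying
the vertex-specific interval degree constraints. -/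
def IsFeasibleCut (G : SimpleGraph V) [DecidableRel G.Adj]
    (a' a'' b' b'' c' c'' d' d'' : V → ℕ) (VL VR : Finset V) : Prop :=
  Disjoint VL VR ∧ VL ∪ VR = Finset.univ ∧ VL.Nonempty ∧ VR.Nonempty ∧
    (∀ v ∈ VL, (a' v ≤ nbr G VL v ∧ nbr G VL v ≤ a'' v) ∧
      (b' v ≤ nbr G VR v ∧ nbr G VR v ≤ b'' v)) ∧
    (∀ v ∈ VR, (c' v ≤ nbr G VR v ∧ nbr G VR v ≤ c'' v) ∧
      (d' v ≤ nbr G VL v ∧ nbr G VL v ≤ d'' v))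

/-- The constraint vector `r` (8 entries per vertex). -/
def rvec (a' a'' b' b'' c' c'' d' d'' : V → ℕ) (v : V) : Fin 8 → ℤ :=
  ![(a' v : ℤ), -(a'' v : ℤ), (b' v : ℤ), -(b'' v : ℤ),
    (c' v : ℤ), -(c'' v : ℤ), (d' v : ℤ), -(d'' v : ℤ)]

/-- The query vector `q_S` (8 entries per vertex) associated to a bipartition `(S, R)` of
`V_A`; vertices outside `S ∪ R` are exactly those of `V_B`. -/
def qvec8 (G : SimpleGraph V) [DecidableRel G.Adj] (n : ℕ) (S R : Finset V) (v : V) :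
    Fin 8 → ℤ :=
  if v ∈ S then
    ![(nbr G S v : ℤ), -(nbr G S v : ℤ), (nbr G R v : ℤ), -(nbr G R v : ℤ),
      (2 * n : ℤ), (2 * n : ℤ), (2 * n : ℤ), (2 * n : ℤ)]
  else if v ∈ R then
    ![(2 * n : ℤ), (2 * n : ℤ), (2 * n : ℤ), (2 * n : ℤ),
      (nbr G R v : ℤ), -(nbr G R v : ℤ), (nbr G S v : ℤ), -(nbr G S v : ℤ)]
  else
    ![(nbr G S v : ℤ), -(nbr G S v : ℤ), (nbr G R v : ℤ), -(nbr G R v : ℤ),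
      (nbr G R v : ℤ), -(nbr G R v : ℤ), (nbr G S v : ℤ), -(nbr G S v : ℤ)]

/-- The data vector `p_{S'}` (8 entries per vertex) associated to a bipartition `(S', R')`
of `V_B`; vertices outside `S' ∪ R'` are exactly those of `V_A`. -/
def pvec8 (G : SimpleGraph V) [DecidableRel G.Adj] (n : ℕ) (S' R' : Finset V) (v : V) :
    Fin 8 → ℤ :=
  if v ∈ S' then
    ![-(nbr G S' v : ℤ), (nbr G S' v : ℤ), -(nbr G R' v : ℤ), (nbr G R' v : ℤ),
      -(2 * n : ℤ), -(2 * n : ℤ), -(2 * n : ℤ), -(2 * n : ℤ)]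
  else if v ∈ R' then
    ![-(2 * n : ℤ), -(2 * n : ℤ), -(2 * n : ℤ), -(2 * n : ℤ),
      -(nbr G R' v : ℤ), (nbr G R' v : ℤ), -(nbr G S' v : ℤ), (nbr G S' v : ℤ)]
  else
    ![-(nbr G S' v : ℤ), (nbr G S' v : ℤ), -(nbr G R' v : ℤ), (nbr G R' v : ℤ),
      -(nbr G R' v : ℤ), (nbr G R' v : ℤ), -(nbr G S' v : ℤ), (nbr G S' v : ℤ)]


lemma nbr_union_eq (G : SimpleGraph V) [DecidableRel G.Adj] {A B : Finset V}
    (h : Disjoint A B) (v : V) :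
    nbr G (A ∪ B) v = nbr G A v + nbr G B v := by
  unfold nbr
  rw [Finset.inter_union_distrib_left]
  exact Finset.card_union_of_disjoint (h.mono Finset.inter_subset_right Finset.inter_subset_right)

lemma nbr_le_card (G : SimpleGraph V) [DecidableRel G.Adj] (A : Finset V) (v : V) :
    nbr G A v ≤ Fintype.card V :=
  le_trans (Finset.card_le_card (Finset.subset_univ _)) (le_of_eq Finset.card_univ)


lemma vec8_five {α : Type*} (a b c d e f g h : α) : ![a,b,c,d,e,f,g,h] 5 = f := rfl
lemma vec8_six {α : Type*} (a b c d e f g h : α) : ![a,b,c,d,e,f,g,h] 6 = g := rfl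
lemma vec8_seven {α : Type*} (a b c d e f g h : α) : ![a,b,c,d,e,f,g,h] 7 = h := rfl

/-- if `(V_L, V_R)` is a feasible interval-constrained cut of `G` and
`S = V_A ∩ V_L`, `R = V_A ∩ V_R`, `S' = V_B ∩ V_L`, `R' = V_B ∩ V_R`, then
`q_S ≥ p_{S'} + r` coordinatewise. -/
theorem stmt_8 (G : SimpleGraph V) [DecidableRel G.Adj]
    (n : ℕ) (hn : n = Fintype.card V)
    (a' a'' b' b'' c' c'' d' d'' : V → ℕ)
    (ha' : ∀ v, a' v ≤ n) (ha'' : ∀ v, a'' v ≤ n) (hb' : ∀ v, b' v ≤ n) (hb'' : ∀ v, b'' v ≤ n)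
    (hc' : ∀ v, c' v ≤ n) (hc'' : ∀ v, c'' v ≤ n) (hd' : ∀ v, d' v ≤ n) (hd'' : ∀ v, d'' v ≤ n)
    (VA VB : Finset V) (hABdisj : Disjoint VA VB) (hABuniv : VA ∪ VB = Finset.univ)
    (VL VR : Finset V) (hfeas : IsFeasibleCut G a' a'' b' b'' c' c'' d' d'' VL VR)
    (S R S' R' : Finset V)
    (hS : S = VA ∩ VL) (hR : R = VA ∩ VR) (hS' : S' = VB ∩ VL) (hR' : R' = VB ∩ VR) :
    ∀ v : V, ∀ k : Fin 8,
      pvec8 G n S' R' v k + rvec a' a'' b' b'' c' c'' d' d'' v k ≤ qvec8 G n S R v k := by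
  intro v k
  obtain ⟨hdisj, huniv, -, -, hL, hRfeas⟩ := hfeas
  have hSS' : S ∪ S' = VL := by
    rw [hS, hS', ← Finset.union_inter_distrib_right, hABuniv, Finset.univ_inter]
  have hRR' : R ∪ R' = VR := by
    rw [hR, hR', ← Finset.union_inter_distrib_right, hABuniv, Finset.univ_inter]
  have hdSS' : Disjoint S S' := by
    rw [hS, hS']; exact hABdisj.mono Finset.inter_subset_left Finset.inter_subset_left
  have hdRR' : Disjoint R R' := by
    rw [hR, hR']; exact hABdisj.mono Finset.inter_subset_left Finset.inter_subset_left
  have hnL : nbr G S v + nbr G S' v = nbr G VL v := by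
    rw [← hSS', nbr_union_eq G hdSS']
  have hnR : nbr G R v + nbr G R' v = nbr G VR v := by
    rw [← hRR', nbr_union_eq G hdRR']
  have h1 : nbr G S v ≤ n := hn ▸ nbr_le_card G S v
  have h2 : nbr G S' v ≤ n := hn ▸ nbr_le_card G S' v
  have h3 : nbr G R v ≤ n := hn ▸ nbr_le_card G R v
  have h4 : nbr G R' v ≤ n := hn ▸ nbr_le_card G R' v
  by_cases hvA : v ∈ VA
  · have hvB : v ∉ VB := Finset.disjoint_left.mp hABdisj hvA
    have hvS' : v ∉ S' := by rw [hS']; intro h; exact hvB (Finset.mem_inter.mp h).1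
    have hvR' : v ∉ R' := by rw [hR']; intro h; exact hvB (Finset.mem_inter.mp h).1
    by_cases hvL : v ∈ VL
    · have hvS : v ∈ S := by rw [hS]; exact Finset.mem_inter.mpr ⟨hvA, hvL⟩
      obtain ⟨⟨ha1, ha2⟩, hb1, hb2⟩ := hL v hvL
      simp only [qvec8, pvec8, rvec, if_pos hvS, if_neg hvS', if_neg hvR']
      have hc1 := hc' v; have hc2 := hc'' v; have hd1 := hd' v; have hd2 := hd'' v
      fin_cases k <;> simp [vec8_five, vec8_six, vec8_seven] <;> omega
    · have hvR : v ∈ VR := by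
        have := Finset.mem_univ v; rw [← huniv, Finset.mem_union] at this; tauto
      have hvS : v ∉ S := by rw [hS]; simp [hvL]
      have hvRm : v ∈ R := by rw [hR]; exact Finset.mem_inter.mpr ⟨hvA, hvR⟩
      obtain ⟨⟨hcc1, hcc2⟩, hdd1, hdd2⟩ := hRfeas v hvR
      simp only [qvec8, pvec8, rvec, if_pos hvRm, if_neg hvS, if_neg hvS', if_neg hvR']
      have ha1 := ha' v; have ha2 := ha'' v; have hb1 := hb' v; have hb2 := hb'' v
      fin_cases k <;> simp [vec8_five, vec8_six, vec8_seven] <;> omega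
  · have hvB : v ∈ VB := by
      have := Finset.mem_univ v; rw [← hABuniv, Finset.mem_union] at this; tauto
    have hvS : v ∉ S := by rw [hS]; intro h; exact hvA (Finset.mem_inter.mp h).1
    have hvRm : v ∉ R := by rw [hR]; intro h; exact hvA (Finset.mem_inter.mp h).1
    by_cases hvL : v ∈ VL
    · have hvS' : v ∈ S' := by rw [hS']; exact Finset.mem_inter.mpr ⟨hvB, hvL⟩
      obtain ⟨⟨ha1, ha2⟩, hb1, hb2⟩ := hL v hvL
      simp only [qvec8, pvec8, rvec, if_pos hvS', if_neg hvS, if_neg hvRm]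
      have hc1 := hc' v; have hc2 := hc'' v; have hd1 := hd' v; have hd2 := hd'' v
      fin_cases k <;> simp [vec8_five, vec8_six, vec8_seven] <;> omega
    · have hvR : v ∈ VR := by
        have := Finset.mem_univ v; rw [← huniv, Finset.mem_union] at this; tauto
      have hvS' : v ∉ S' := by rw [hS']; simp [hvL]
      have hvR' : v ∈ R' := by rw [hR']; exact Finset.mem_inter.mpr ⟨hvB, hvR⟩
      obtain ⟨⟨hcc1, hcc2⟩, hdd1, hdd2⟩ := hRfeas v hvR
      simp only [qvec8, pvec8, rvec, if_pos hvR', if_neg hvS, if_neg hvRm, if_neg hvS']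
      have ha1 := ha' v; have ha2 := ha'' v; have hb1 := hb' v; have hb2 := hb'' v
      fin_cases k <;> simp [vec8_five, vec8_six, vec8_seven] <;> omega
end
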